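/- With the data E₀, E₁, π₀, π₁, U, T₀, T₁, N₀, N₁ and V(T₀,T₁) as in the context: if V(T₀,T₁)^⊥ ⊆ V(T₀,T₁), then π₀(N₀) ⊆ T₀ and π₁(N₁) ⊆ T₁ (i.e. T₀ and T₁ are coisotropic for π₀ and π₁ respectively). -/

import Mathlib

open MeasureTheory Set

/-- An element of `W(E)`: a pair `(λ, φ)` of continuous maps on `[0,1]` with values in `E`
and in the dual `E* = E →L[ℝ] ℝ` respectively. -/
structure WPair (E : Type*) [NormedAddCommGroup E] [NormedSpace ℝ E] where
  lam : ℝ → E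
  phi : ℝ → E →L[ℝ] ℝ
  lam_cont : ContinuousOn lam (Icc 0 1)
  phi_cont : ContinuousOn phi (Icc 0 1)

/-- The alternating bilinear form `Ω((λ,φ),(λ',φ')) = ∫₀¹ (φ(u)(λ'(u)) − φ'(u)(λ(u))) du`. -/
noncomputable def Omega {E : Type*} [NormedAddCommGroup E] [NormedSpace ℝ E]
    (w w' : WPair E) : ℝ :=
  ∫ u in (0:ℝ)..(1:ℝ), (w.phi u (w'.lam u) - w'.phi u (w.lam u))

/-- The `Ω`-orthogonal of a subset of `W(E)`. -/
def orth {E : Type*} [NormedAddCommGroup E] [NormedSpace ℝ E] (A : Set (WPair E)) :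
    Set (WPair E) :=
  {w | ∀ a ∈ A, Omega a w = 0}

/-- The annihilator `N = { α ∈ E* : α vanishes on T }` of a subspace `T ⊆ E`. -/
def Ann {E : Type*} [NormedAddCommGroup E] [NormedSpace ℝ E] (T : Submodule ℝ E) :
    Set (E →L[ℝ] ℝ) :=
  {α | ∀ v ∈ T, α v = 0}

/-- The space `V(T₀,T₁)` of solutions `(λ,φ)` of `λ(u) = λ(0) − π₀ ∫₀ᵘ φ` with boundary
conditions `λ(0) ∈ T₀` and `U⁻¹(λ(1)) ∈ T₁`. -/
noncomputable def VSet {E₀ E₁ : Type*}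
    [NormedAddCommGroup E₀] [NormedSpace ℝ E₀]
    [NormedAddCommGroup E₁] [NormedSpace ℝ E₁]
    (π₀ : (E₀ →L[ℝ] ℝ) →ₗ[ℝ] E₀) (U : E₁ ≃L[ℝ] E₀)
    (T₀ : Submodule ℝ E₀) (T₁ : Submodule ℝ E₁) : Set (WPair E₀) :=
  {w | (∀ u ∈ Icc (0:ℝ) 1, w.lam u = w.lam 0 - π₀ (∫ s in (0:ℝ)..u, w.phi s)) ∧
       w.lam 0 ∈ T₀ ∧ U.symm (w.lam 1) ∈ T₁}

/-!
Test `V^⊥` against the pairs with constant momentum `φ ≡ β`, i.e. `λ(u) = c − u·π₀β`. For `(a, φₐ)`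
solving the flow equation, skew-symmetry of `π₀` makes the integrand of `Ω(a, (λ, β))` the
derivative of `u ↦ F(u)(c − u·π₀β) − u·β(a(0))` with `F(u) = ∫₀ᵘ φₐ`, so
`Ω = F(1)(c − π₀β) − β(a(0))`. This is `−β(a(0))` for `c = π₀β` and `−β(a(1))` for `c = 0`, so
for `β ∈ N₀`, resp. `β ∘ U ∈ N₁`, the test pair lies in `V^⊥ ⊆ V`; its boundary values `π₀β`,
resp. `−π₀β`, then give the claim, transported to `E₁` by `U ∘ π₁ ∘ Uᵀ = π₀`.
-/
namespace WPair

variable {E : Type*} [NormedAddCommGroup E] [NormedSpace ℝ E]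

lemma intervalIntegrable_phi (a : WPair E) {u v : ℝ} (hu : u ∈ Icc (0:ℝ) 1)
    (hv : v ∈ Icc (0:ℝ) 1) : IntervalIntegrable a.phi volume u v :=
  (a.phi_cont.mono (uIcc_subset_Icc hu hv)).intervalIntegrable

lemma continuousOn_primitive_phi (a : WPair E) :
    ContinuousOn (fun t => ∫ s in (0:ℝ)..t, a.phi s) (Icc 0 1) := by
  have h := intervalIntegral.continuousOn_primitive_interval (μ := volume) (a := (0:ℝ)) (b := 1)
    (by rw [uIcc_of_le zero_le_one]; exact a.phi_cont.integrableOn_Icc)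
  rwa [uIcc_of_le zero_le_one] at h

lemma hasDerivAt_primitive_phi (a : WPair E) {u : ℝ} (hu : u ∈ Ioo (0:ℝ) 1) :
    HasDerivAt (fun t => ∫ s in (0:ℝ)..t, a.phi s) (a.phi u) u := by
  have hcont := a.phi_cont.mono Ioo_subset_Icc_self
  exact intervalIntegral.integral_hasDerivAt_right
    (a.intervalIntegrable_phi (left_mem_Icc.2 zero_le_one) (Ioo_subset_Icc_self hu))
    (hcont.stronglyMeasurableAtFilter isOpen_Ioo u hu)
    (hcont.continuousAt (isOpen_Ioo.mem_nhds hu))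

/-- The solution of `λ(u) = c − π(∫₀ᵘ φ)` with constant momentum `φ ≡ β`. -/
noncomputable def ofConstPhi (π : (E →L[ℝ] ℝ) →ₗ[ℝ] E) (β : E →L[ℝ] ℝ) (c : E) : WPair E where
  lam u := c - u • π β
  phi _ := β
  lam_cont := Continuous.continuousOn (by fun_prop)
  phi_cont := continuousOn_const

section FlowSolution

variable {π : (E →L[ℝ] ℝ) →ₗ[ℝ] E} (hskew : ∀ α β : E →L[ℝ] ℝ, α (π β) = - β (π α))
  {a : WPair E} (ha : ∀ u ∈ Icc (0:ℝ) 1, a.lam u = a.lam 0 - π (∫ s in (0:ℝ)..u, a.phi s))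
  (β : E →L[ℝ] ℝ)
include hskew ha

lemma omega_ofConstPhi (c : E) :
    Omega a (ofConstPhi π β c) = (∫ s in (0:ℝ)..1, a.phi s) (c - π β) - β (a.lam 0) := by
  set F : ℝ → E →L[ℝ] ℝ := fun t => ∫ s in (0:ℝ)..t, a.phi s
  have hderiv : ∀ u ∈ Ioo (0:ℝ) 1, HasDerivAt (fun t => F t (c - t • π β) - t * β (a.lam 0))
      (a.phi u (c - u • π β) - β (a.lam u)) u := by
    intro u hu
    have hline : HasDerivAt (fun t : ℝ => c - t • π β) (-π β) u := by
      simpa using ((hasDerivAt_id u).smul_const (π β)).const_sub c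
    have hg := ((a.hasDerivAt_primitive_phi hu).clm_apply hline).sub
      ((hasDerivAt_id u).mul_const (β (a.lam 0)))
    have hβ : β (a.lam u) = β (a.lam 0) + F u (π β) := by
      rw [ha u (Ioo_subset_Icc_self hu), map_sub, hskew β (F u), sub_neg_eq_add]
    refine hg.congr_deriv ?_
    rw [hβ, map_neg, one_mul]
    ring
  have hint : IntervalIntegrable (fun u => a.phi u (c - u • π β) - β (a.lam u)) volume 0 1 := by
    refine ContinuousOn.intervalIntegrable ?_
    rw [uIcc_of_le zero_le_one]
    exact (a.phi_cont.clm_apply (Continuous.continuousOn (by fun_prop))).sub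
      (β.continuous.comp_continuousOn a.lam_cont)
  have hcont : ContinuousOn (fun t => F t (c - t • π β) - t * β (a.lam 0)) (Icc 0 1) :=
    (a.continuousOn_primitive_phi.clm_apply (Continuous.continuousOn (by fun_prop))).sub
      (by fun_prop)
  have hftc := intervalIntegral.integral_eq_sub_of_hasDerivAt_of_le zero_le_one hcont hderiv hint
  simpa [F, Omega, ofConstPhi] using hftc

lemma omega_ofConstPhi_self : Omega a (ofConstPhi π β (π β)) = - β (a.lam 0) := by
  simp [omega_ofConstPhi hskew ha]

lemma omega_ofConstPhi_zero : Omega a (ofConstPhi π β 0) = - β (a.lam 1) := by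
  rw [omega_ofConstPhi hskew ha, zero_sub, map_neg, hskew, neg_neg,
    ha 1 (right_mem_Icc.2 zero_le_one), map_sub]
  ring

end FlowSolution

end WPair

open WPair

theorem coisotropic_boundary_of_VSet_coisotropic_general
    (E₀ E₁ : Type*)
    [NormedAddCommGroup E₀] [NormedSpace ℝ E₀]
    [NormedAddCommGroup E₁] [NormedSpace ℝ E₁]
    (π₀ : (E₀ →L[ℝ] ℝ) →ₗ[ℝ] E₀) (π₁ : (E₁ →L[ℝ] ℝ) →ₗ[ℝ] E₁)
    (hskew₀ : ∀ α β : E₀ →L[ℝ] ℝ, α (π₀ β) = - β (π₀ α))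
    (U : E₁ ≃L[ℝ] E₀)
    (hU : ∀ α : E₀ →L[ℝ] ℝ, U (π₁ (α.comp (U : E₁ →L[ℝ] E₀))) = π₀ α)
    (T₀ : Submodule ℝ E₀) (T₁ : Submodule ℝ E₁)
    (hco : orth (VSet π₀ U T₀ T₁) ⊆ VSet π₀ U T₀ T₁) :
    (∀ α ∈ Ann T₀, π₀ α ∈ T₀) ∧ (∀ α ∈ Ann T₁, π₁ α ∈ T₁) := by
  constructor
  · intro α hα
    have hw : ofConstPhi π₀ α (π₀ α) ∈ orth (VSet π₀ U T₀ T₁) := fun a ha => by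
      rw [omega_ofConstPhi_self hskew₀ ha.1, hα _ ha.2.1, neg_zero]
    simpa [ofConstPhi] using (hco hw).2.1
  · intro α hα
    set β : E₀ →L[ℝ] ℝ := α.comp (U.symm : E₀ →L[ℝ] E₁)
    have hw : ofConstPhi π₀ β 0 ∈ orth (VSet π₀ U T₀ T₁) := fun a ha => by
      rw [omega_ofConstPhi_zero hskew₀ ha.1, neg_eq_zero]
      exact hα _ ha.2.2
    have hπ : U.symm (π₀ β) = π₁ α := by
      rw [← hU β, U.symm_apply_apply]
      congr 2
      ext x
      simp [β]
    have h1 := (hco hw).2.2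
    simp only [ofConstPhi, zero_sub, one_smul, map_neg, hπ] at h1
    simpa using T₁.neg_mem h1

theorem coisotropic_boundary_of_VSet_coisotropic
    (E₀ E₁ : Type*)
    [NormedAddCommGroup E₀] [NormedSpace ℝ E₀] [FiniteDimensional ℝ E₀]
    [NormedAddCommGroup E₁] [NormedSpace ℝ E₁] [FiniteDimensional ℝ E₁]
    (π₀ : (E₀ →L[ℝ] ℝ) →ₗ[ℝ] E₀) (π₁ : (E₁ →L[ℝ] ℝ) →ₗ[ℝ] E₁)
    (hskew₀ : ∀ α β : E₀ →L[ℝ] ℝ, α (π₀ β) = - β (π₀ α))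
    (hskew₁ : ∀ α β : E₁ →L[ℝ] ℝ, α (π₁ β) = - β (π₁ α))
    (U : E₁ ≃L[ℝ] E₀)
    (hU : ∀ α : E₀ →L[ℝ] ℝ, U (π₁ (α.comp (U : E₁ →L[ℝ] E₀))) = π₀ α)
    (T₀ : Submodule ℝ E₀) (T₁ : Submodule ℝ E₁)
    (hco : orth (VSet π₀ U T₀ T₁) ⊆ VSet π₀ U T₀ T₁) :
    (∀ α ∈ Ann T₀, π₀ α ∈ T₀) ∧ (∀ α ∈ Ann T₁, π₁ α ∈ T₁) :=
  coisotropic_boundary_of_VSet_coisotropic_general E₀ E₁ π₀ π₁ hskew₀ U hU T₀ T₁ hco
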